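/- arXiv:math/0703555 — 3 statements merged into one kernel-verified Lean document; each statement's English description precedes it below -/
import Mathlib

section
/- Let C and D be categories with finite limits and let f : C → D be a functor preserving finite limits. Then the left Kan extension f_! : Psh(C) → Psh(D) along the Yoneda embedding (the unique colimit-preserving functor with f_!(y(c)) ≅ y(f(c))) preserves finite limits. -/
open CategoryTheory Limits

universe u

/-- Both `L` and `f.op.lan` are colimit-preserving extensions of `f ⋙ yoneda` along the Yoneda
embedding, hence isomorphic. -/
noncomputable def CategoryTheory.Presheaf.isoLanOfPreservesColimits {C D : Type u}
    [SmallCategory C] [SmallCategory D] (f : C ⥤ D)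
    (L : (Cᵒᵖ ⥤ Type u) ⥤ (Dᵒᵖ ⥤ Type u)) [PreservesColimits L]
    (e : yoneda ⋙ L ≅ f ⋙ yoneda) :
    L ≅ f.op.lan := by
  have : PreservesColimits (f.op.lan : (Cᵒᵖ ⥤ Type u) ⥤ Dᵒᵖ ⥤ Type u) :=
    (f.op.lanAdjunction (Type u)).leftAdjoint_preservesColimits
  have eL : f ⋙ uliftYoneda.{u} ≅ uliftYoneda.{u} ⋙ L :=
    Functor.isoWhiskerLeft f (uliftYonedaIsoYoneda.{u, u, u} (C := D)) ≪≫ e.symm ≪≫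
      Functor.isoWhiskerRight (uliftYonedaIsoYoneda.{u, u, u} (C := C)).symm L
  exact uniqueExtensionAlongULiftYoneda.{u} L eL ≪≫
    (uniqueExtensionAlongULiftYoneda.{u} (f.op.lan : (Cᵒᵖ ⥤ Type u) ⥤ Dᵒᵖ ⥤ Type u)
      (compULiftYonedaIsoULiftYonedaCompLan.{u} f)).symm

theorem stmt0_general {C D : Type u} [SmallCategory C] [SmallCategory D]
    [HasFiniteLimits C]
    (f : C ⥤ D) [PreservesFiniteLimits f]
    (L : (Cᵒᵖ ⥤ Type u) ⥤ (Dᵒᵖ ⥤ Type u)) [PreservesColimits L]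
    (e : yoneda ⋙ L ≅ f ⋙ yoneda) :
    Nonempty (PreservesFiniteLimits L) :=
  -- `f` is representably flat, so `f.op.lan` preserves finite limits
  -- (`lan_preservesFiniteLimits_of_preservesFiniteLimits`).
  ⟨preservesFiniteLimits_of_natIso (Presheaf.isoLanOfPreservesColimits f L e).symm⟩

/-- Let `C` and `D` be categories with finite limits and `f : C ⥤ D` a
functor preserving finite limits.  Then the left Kan extension
`f_! : Psh(C) ⥤ Psh(D)` along the Yoneda embedding, i.e. the (essentially unique)
colimit-preserving functor `L` equipped with an isomorphism `yoneda ⋙ L ≅ f ⋙ yoneda`,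
preserves finite limits. -/
theorem stmt0 {C D : Type u} [SmallCategory C] [SmallCategory D]
    [HasFiniteLimits C] [HasFiniteLimits D]
    (f : C ⥤ D) [PreservesFiniteLimits f]
    (L : (Cᵒᵖ ⥤ Type u) ⥤ (Dᵒᵖ ⥤ Type u)) [PreservesColimits L]
    (e : yoneda ⋙ L ≅ f ⋙ yoneda) :
    Nonempty (PreservesFiniteLimits L) :=
  stmt0_general f L e
end

section
/- Let (A, m) be a commutative noetherian local ring and K a perfect complex of A-modules. Then K has Tor-amplitude contained in an interval [a,b] if and only if H^n(K ⊗^L_A A/m) = 0 for all n outside [a,b]. -/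
/-!
Let `k` be the residue field of `A`. If `Hⁱ(K ⊗ k) = 0` for all `i ≥ n`, or for all `i ≤ n`,
then `K` is split exact in degree `n`: there are `h : Kⁿ → Kⁿ⁻¹` and `h' : Kⁿ⁺¹ → Kⁿ` with
`d h + h' d = id` on `Kⁿ`. Such an identity survives tensoring with any module `M`, so
`Hⁿ(K ⊗ M) = 0`.

The maps are built degree by degree, starting where `K` vanishes. Descending: if `d h' d = d` on
`Kⁿ`, then `id - h' d` projects `Kⁿ` onto its cycles `Zⁿ`, which are therefore finite, and
`Kⁿ⁻¹ → Zⁿ` is surjective by Nakayama's lemma since it is so after `⊗ k`; projectivity of `Kⁿ`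
lifts `id - h' d` through it to `h`. Ascending: if `d h d = d` on `Kⁿ⁻¹`, then `id - d h` factors
through `Kⁿ / Bⁿ`, and `Kⁿ / Bⁿ → Kⁿ⁺¹` is a split injection because it is injective after
`⊗ k` and `Kⁿ⁺¹` is free; a retraction gives `h'`.
-/

open CategoryTheory Limits MonoidalCategory

/-- Degreewise tensor product of a complex of modules with a fixed module.
Since the complexes considered below have projective (hence flat) components, this
computes the derived tensor product `K ⊗^L M`. -/
noncomputable def cxTensor {A : Type} [CommRing A]
    (K : CochainComplex (ModuleCat.{0} A) ℤ) (M : ModuleCat.{0} A) :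
    CochainComplex (ModuleCat.{0} A) ℤ :=
  ((tensorRight M).mapHomologicalComplex (ComplexShape.up ℤ)).obj K

open Function TensorProduct IsLocalRing

section Modules

variable {A X Y Z : Type*} [CommRing A] [AddCommGroup X] [Module A X] [AddCommGroup Y]
  [Module A Y] [AddCommGroup Z] [Module A Z]

def LinearMap.HasInnerInverse (f : X →ₗ[A] Y) : Prop :=
  ∃ g : Y →ₗ[A] X, f ∘ₗ g ∘ₗ f = f

namespace LinearMap

theorem hasInnerInverse_zero : (0 : X →ₗ[A] Y).HasInnerInverse :=
  ⟨0, by simp⟩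

variable {f : X →ₗ[A] Y} {g : Y →ₗ[A] Z} {h : Y →ₗ[A] X} {h' : Z →ₗ[A] Y}

theorem exact_of_add_eq_id (hgf : g ∘ₗ f = 0) (hid : f ∘ₗ h + h' ∘ₗ g = id) : Exact f g := by
  intro y
  refine ⟨fun hy => ⟨h y, ?_⟩, ?_⟩
  · simpa [hy] using congr($hid y)
  · rintro ⟨x, rfl⟩
    exact congr($hgf x)

theorem exact_rTensor_of_add_eq_id (hgf : g ∘ₗ f = 0) (hid : f ∘ₗ h + h' ∘ₗ g = id)
    (Q : Type*) [AddCommGroup Q] [Module A Q] : Exact (f.rTensor Q) (g.rTensor Q) :=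
  exact_of_add_eq_id (h := h.rTensor Q) (h' := h'.rTensor Q)
    (by rw [← rTensor_comp, hgf, rTensor_zero])
    (by rw [← rTensor_comp, ← rTensor_comp, ← rTensor_add, hid, rTensor_id])

theorem hasInnerInverse_left_of_add_eq_id (hgf : g ∘ₗ f = 0) (hid : f ∘ₗ h + h' ∘ₗ g = id) :
    f.HasInnerInverse :=
  ⟨h, by rw [← comp_assoc, eq_sub_of_add_eq hid, sub_comp, id_comp, comp_assoc, hgf, comp_zero,
    sub_zero]⟩

theorem hasInnerInverse_right_of_add_eq_id (hgf : g ∘ₗ f = 0) (hid : f ∘ₗ h + h' ∘ₗ g = id) :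
    g.HasInnerInverse :=
  ⟨h', by rw [eq_sub_of_add_eq' hid, comp_sub, comp_id, ← comp_assoc, hgf, zero_comp,
    sub_zero]⟩

end LinearMap

namespace IsLocalRing

open LinearMap Submodule

variable [IsLocalRing A]

theorem surjective_of_surjective_rTensor_residueField [Module.Finite A Y] (f : X →ₗ[A] Y)
    (hf : Surjective (f.rTensor (ResidueField A))) : Surjective f := by
  have hπ : Exact (f.rTensor (ResidueField A)) ((range f).mkQ.rTensor (ResidueField A)) :=
    rTensor_exact _ f.exact_map_mkQ_range (mkQ_surjective _)
  have : Subsingleton ((Y ⧸ range f) ⊗[A] ResidueField A) := by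
    refine subsingleton_of_forall_eq 0 fun c => ?_
    obtain ⟨y, rfl⟩ := rTensor_surjective _ (mkQ_surjective _) c
    exact (hπ y).mpr (hf y)
  have : Subsingleton (Y ⧸ range f) := by
    rw [← subsingleton_tensorProduct (R := A)]
    exact (TensorProduct.comm A _ _).toEquiv.subsingleton
  rwa [← range_eq_top, ← Submodule.Quotient.subsingleton_iff]

variable {f : X →ₗ[A] Y} {g : Y →ₗ[A] Z}

theorem exists_add_eq_id_of_rightInnerInverse [Module.Finite A Y] [Module.Projective A Y]
    (hgf : g ∘ₗ f = 0) (hexact : Exact (f.rTensor (ResidueField A)) (g.rTensor (ResidueField A)))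
    {h' : Z →ₗ[A] Y} (hh' : g ∘ₗ h' ∘ₗ g = g) :
    ∃ h : Y →ₗ[A] X, f ∘ₗ h + h' ∘ₗ g = LinearMap.id := by
  let p : Y →ₗ[A] ker g := (LinearMap.id - h' ∘ₗ g).codRestrict (ker g) fun y => by
    simpa [sub_eq_zero] using congr($hh' y).symm
  let f' : X →ₗ[A] ker g := f.codRestrict (ker g) fun x => congr($hgf x)
  have hpι : p ∘ₗ (ker g).subtype = LinearMap.id := by ext z; simp [p]
  have hpf : p ∘ₗ f = f' := by ext x; simp [p, f', show g (f x) = 0 from congr($hgf x)]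
  have : Module.Finite A (ker g) := .of_surjective p fun z => ⟨z, congr($hpι z)⟩
  have hf' : Surjective f' := surjective_of_surjective_rTensor_residueField f' fun z => by
    obtain ⟨w, hw⟩ := (hexact ((ker g).subtype.rTensor _ z)).mp <| by
      rw [← rTensor_comp_apply, comp_ker_subtype, rTensor_zero, LinearMap.zero_apply]
    refine ⟨w, ?_⟩
    rw [← hpf, rTensor_comp_apply, hw, ← rTensor_comp_apply, hpι, rTensor_id, LinearMap.id_apply]
  obtain ⟨h, hh⟩ := Module.projective_lifting_property f' p hf'
  refine ⟨h, ?_⟩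
  have : f ∘ₗ h = LinearMap.id - h' ∘ₗ g := congr((ker g).subtype ∘ₗ $hh)
  rw [this, sub_add_cancel]

theorem exists_add_eq_id_of_leftInnerInverse [Module.Finite A Y] [Module.Finite A Z]
    [Module.Projective A Z] (hgf : g ∘ₗ f = 0)
    (hexact : Exact (f.rTensor (ResidueField A)) (g.rTensor (ResidueField A)))
    {h : Y →ₗ[A] X} (hh : f ∘ₗ h ∘ₗ f = f) :
    ∃ h' : Z →ₗ[A] Y, f ∘ₗ h + h' ∘ₗ g = LinearMap.id := by
  have := Module.free_of_flat_of_isLocalRing (R := A) (P := Z)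
  let q : (Y ⧸ range f) →ₗ[A] Y := (range f).liftQ (LinearMap.id - f ∘ₗ h) <| by
    rintro _ ⟨x, rfl⟩
    simpa [sub_eq_zero] using congr($hh x).symm
  let g' : (Y ⧸ range f) →ₗ[A] Z := (range f).liftQ g (range_le_ker_iff.mpr hgf)
  have hg' : Injective (g'.rTensor (ResidueField A)) := by
    refine (injective_iff_map_eq_zero _).mpr fun c hc => ?_
    obtain ⟨y, rfl⟩ := rTensor_surjective _ (mkQ_surjective _) c
    rw [← rTensor_comp_apply, liftQ_mkQ] at hc
    obtain ⟨w, rfl⟩ := (hexact y).mp hc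
    rw [← rTensor_comp_apply, range_mkQ_comp, rTensor_zero, LinearMap.zero_apply]
  obtain ⟨ℓ, hℓ⟩ := (split_injective_iff_lTensor_residueField_injective g').mpr
    ((lTensor_inj_iff_rTensor_inj _ _).mpr hg')
  refine ⟨q ∘ₗ ℓ, ?_⟩
  have : q ∘ₗ ℓ ∘ₗ g = LinearMap.id - f ∘ₗ h := by
    calc q ∘ₗ ℓ ∘ₗ g = q ∘ₗ (ℓ ∘ₗ g') ∘ₗ (range f).mkQ := by
          rw [LinearMap.comp_assoc, liftQ_mkQ]
    _ = LinearMap.id - f ∘ₗ h := by rw [hℓ, LinearMap.id_comp, liftQ_mkQ]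
  rw [LinearMap.comp_assoc, this, add_sub_cancel]

end IsLocalRing

end Modules

theorem HomologicalComplex.d_hom_comp_d_hom {A ι : Type*} [Ring A] {c : ComplexShape ι}
    (K : HomologicalComplex (ModuleCat A) c) (i j k : ι) :
    (K.d j k).hom ∘ₗ (K.d i j).hom = 0 := by
  rw [← ModuleCat.hom_comp, K.d_comp_d, ModuleCat.hom_zero]

namespace CochainComplex

open LinearMap IsLocalRing

variable {A : Type*} [CommRing A] [IsLocalRing A] {K : CochainComplex (ModuleCat A) ℤ}
  [∀ n, Module.Finite A (K.X n)] [∀ n, Module.Projective A (K.X n)]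

theorem hasInnerInverse_d_of_le {b n₁ : ℤ} (hzero : ∀ n, n₁ < n → IsZero (K.X n))
    (hexact : ∀ i j k, i + 1 = j → j + 1 = k → b < j →
      Exact ((K.d i j).hom.rTensor (ResidueField A)) ((K.d j k).hom.rTensor (ResidueField A)))
    (n : ℤ) (hn : b ≤ n) : (K.d n (n + 1)).hom.HasInnerInverse := by
  obtain hn₁ | hn₁ := lt_or_ge (n₁ + 1) n
  · rw [(hzero n (by omega)).eq_of_src (K.d n (n + 1)) 0]
    exact hasInnerInverse_zero
  induction n, hn₁ using Int.leInductionDown with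
  | base =>
    rw [(hzero (n₁ + 1) (lt_add_one n₁)).eq_of_src (K.d _ _) 0]
    exact hasInnerInverse_zero
  | pred n _ ih =>
    rw [sub_add_cancel]
    obtain ⟨h', hh'⟩ := ih (by omega)
    obtain ⟨h, hh⟩ := exists_add_eq_id_of_rightInnerInverse (K.d_hom_comp_d_hom _ _ _)
      (hexact (n - 1) n (n + 1) (sub_add_cancel n 1) rfl (by omega)) hh'
    exact hasInnerInverse_left_of_add_eq_id (K.d_hom_comp_d_hom _ _ _) hh

theorem hasInnerInverse_d_of_lt {a n₀ : ℤ} (hzero : ∀ n, n < n₀ → IsZero (K.X n))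
    (hexact : ∀ i j k, i + 1 = j → j + 1 = k → j < a →
      Exact ((K.d i j).hom.rTensor (ResidueField A)) ((K.d j k).hom.rTensor (ResidueField A)))
    (n : ℤ) (hn : n < a) : (K.d n (n + 1)).hom.HasInnerInverse := by
  obtain hn₀ | hn₀ := lt_or_ge n (n₀ - 1)
  · rw [(hzero n (by omega)).eq_of_src (K.d n (n + 1)) 0]
    exact hasInnerInverse_zero
  induction n, hn₀ using Int.leInduction with
  | base =>
    rw [(hzero (n₀ - 1) (sub_one_lt n₀)).eq_of_src (K.d _ _) 0]
    exact hasInnerInverse_zero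
  | succ n _ ih =>
    obtain ⟨h, hh⟩ := ih (by omega)
    obtain ⟨h', hh'⟩ := exists_add_eq_id_of_leftInnerInverse (K.d_hom_comp_d_hom _ _ _)
      (hexact n (n + 1) (n + 1 + 1) rfl rfl hn) hh
    exact hasInnerInverse_right_of_add_eq_id (K.d_hom_comp_d_hom _ _ _) hh'

theorem exists_add_eq_id_of_lt_or_lt {a b n₀ n₁ : ℤ}
    (hzero : ∀ n, (n < n₀ ∨ n₁ < n) → IsZero (K.X n))
    (hexact : ∀ i j k, i + 1 = j → j + 1 = k → (j < a ∨ b < j) →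
      Exact ((K.d i j).hom.rTensor (ResidueField A)) ((K.d j k).hom.rTensor (ResidueField A)))
    (n : ℤ) (hn : n < a ∨ b < n) :
    ∃ (h : K.X n →ₗ[A] K.X (n - 1)) (h' : K.X (n + 1) →ₗ[A] K.X n),
      (K.d (n - 1) n).hom ∘ₗ h + h' ∘ₗ (K.d n (n + 1)).hom = LinearMap.id := by
  have hexact_n := hexact (n - 1) n (n + 1) (sub_add_cancel n 1) rfl hn
  rcases hn with hn | hn
  · have hinv := hasInnerInverse_d_of_lt (fun m hm => hzero m (.inl hm))
      (fun i j k hij hjk hj => hexact i j k hij hjk (.inl hj)) (n - 1) (by omega)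
    rw [sub_add_cancel] at hinv
    obtain ⟨h, hh⟩ := hinv
    exact ⟨h, exists_add_eq_id_of_leftInnerInverse (K.d_hom_comp_d_hom _ _ _) hexact_n hh⟩
  · obtain ⟨h', hh'⟩ := hasInnerInverse_d_of_le (fun m hm => hzero m (.inr hm))
      (fun i j k hij hjk hj => hexact i j k hij hjk (.inr hj)) n hn.le
    obtain ⟨h, hh⟩ := exists_add_eq_id_of_rightInnerInverse (K.d_hom_comp_d_hom _ _ _) hexact_n hh'
    exact ⟨h, h', hh⟩

end CochainComplex

theorem isZero_homology_cxTensor_iff {A : Type} [CommRing A]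
    (K : CochainComplex (ModuleCat.{0} A) ℤ) (M : ModuleCat.{0} A) {i j k : ℤ} (hij : i + 1 = j)
    (hjk : j + 1 = k) :
    IsZero ((cxTensor K M).homology j) ↔
      Exact ((K.d i j).hom.rTensor M) ((K.d j k).hom.rTensor M) := by
  rw [← HomologicalComplex.exactAt_iff_isZero_homology,
    HomologicalComplex.exactAt_iff' _ i j k ((ComplexShape.up ℤ).prev_eq' hij)
      ((ComplexShape.up ℤ).next_eq' hjk),
    ShortComplex.ShortExact.moduleCat_exact_iff_function_exact]
  rfl

theorem stmt6_general (A : Type) [CommRing A] [IsLocalRing A]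
    (a b : ℤ) (K : CochainComplex (ModuleCat.{0} A) ℤ)
    (hfgproj : ∀ n : ℤ, Module.Finite A (K.X n) ∧ Module.Projective A (K.X n))
    (hbdd : ∃ n₀ n₁ : ℤ, ∀ n : ℤ, (n < n₀ ∨ n₁ < n) → IsZero (K.X n)) :
    (∀ (M : ModuleCat.{0} A) (n : ℤ), (n < a ∨ b < n) → IsZero ((cxTensor K M).homology n)) ↔
      (∀ n : ℤ, (n < a ∨ b < n) →
        IsZero ((cxTensor K (ModuleCat.of A (IsLocalRing.ResidueField A))).homology n)) := by
  refine ⟨fun hM n hn => hM _ n hn, fun hk M n hn => ?_⟩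
  obtain ⟨n₀, n₁, hzero⟩ := hbdd
  have hfin : ∀ n, Module.Finite A (K.X n) := fun n => (hfgproj n).1
  have hproj : ∀ n, Module.Projective A (K.X n) := fun n => (hfgproj n).2
  have hexact i j k (hij : i + 1 = j) (hjk : j + 1 = k) (hj : j < a ∨ b < j) :=
    (isZero_homology_cxTensor_iff K (.of A (ResidueField A)) hij hjk).mp (hk j hj)
  obtain ⟨h, h', hid⟩ := CochainComplex.exists_add_eq_id_of_lt_or_lt hzero hexact n hn
  exact (isZero_homology_cxTensor_iff K M (sub_add_cancel n 1) rfl).mpr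
    (LinearMap.exact_rTensor_of_add_eq_id (K.d_hom_comp_d_hom _ _ _) hid M)

/-- Let `(A, m)` be a commutative noetherian local ring and `K` a perfect
complex of `A`-modules (given as a bounded complex of finitely generated projective
modules).  Then `K` has Tor-amplitude contained in `[a,b]` (i.e. `Hⁿ(K ⊗^L M) = 0`
for every module `M` and every `n ∉ [a,b]`) if and only if
`Hⁿ(K ⊗^L A/m) = 0` for all `n ∉ [a,b]`. -/
theorem stmt6 (A : Type) [CommRing A] [IsNoetherianRing A] [IsLocalRing A]
    (a b : ℤ) (K : CochainComplex (ModuleCat.{0} A) ℤ)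
    (hfgproj : ∀ n : ℤ, Module.Finite A (K.X n) ∧ Module.Projective A (K.X n))
    (hbdd : ∃ n₀ n₁ : ℤ, ∀ n : ℤ, (n < n₀ ∨ n₁ < n) → IsZero (K.X n)) :
    (∀ (M : ModuleCat.{0} A) (n : ℤ), (n < a ∨ b < n) → IsZero ((cxTensor K M).homology n)) ↔
      (∀ n : ℤ, (n < a ∨ b < n) →
        IsZero ((cxTensor K (ModuleCat.of A (IsLocalRing.ResidueField A))).homology n)) :=
  stmt6_general A a b K hfgproj hbdd
end

section
/- Let A be a commutative ring and F a bounded-above complex of finite free A-modules with F^n = 0 for n > 0. Suppose A is local with maximal ideal m, and suppose H^i(F ⊗^L_A A/m) = 0 for all i < n (for some n ≤ 0). Then the cokernel of F^{n-1} → F^n satisfies Tor_i^A(coker, A/m) = 0 for all i > 0; in particular, if A is noetherian this cokernel is free. -/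
open CategoryTheory Limits MonoidalCategory

/-!
Write `d : F^{n-1} → F^n` and `k` for the residue field. The coker of `d` is presented by
`F^{n-1} ⧸ im(F^{n-2}) → F^n`, and by right exactness of `- ⊗ k` the vanishing of
`H^{n-1}(F ⊗ k)` says exactly that this presentation stays injective after `⊗ k`. Over a local
ring, a module presented by a finite module mapping into a finite free one with this property is
free (a Nakayama argument), so the cokernel is free, hence flat, and its higher `Tor` vanishes.
-/

section

variable {R : Type*} [CommRing R] {L M N : Type*} [AddCommGroup L] [Module R L]
  [AddCommGroup M] [Module R M] [AddCommGroup N] [Module R N]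

theorem LinearMap.rTensor_liftQ_range_injective (Q : Type*) [AddCommGroup Q] [Module R Q]
    {f : L →ₗ[R] M} {g : M →ₗ[R] N} (hfg : g ∘ₗ f = 0)
    (hex : ker (g.rTensor Q) ≤ range (f.rTensor Q)) :
    Function.Injective (((range f).liftQ g (range_le_ker_iff.mpr hfg)).rTensor Q) := by
  rw [injective_iff_map_eq_zero]
  intro x hx
  obtain ⟨y, rfl⟩ := (range f).mkQ.rTensor_surjective Q (Submodule.mkQ_surjective _) x
  have hy : y ∈ ker (g.rTensor Q) := by
    rw [mem_ker, ← hx, ← rTensor_comp_apply, Submodule.liftQ_mkQ]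
  obtain ⟨z, rfl⟩ := hex hy
  rw [← rTensor_comp_apply, range_mkQ_comp, rTensor_zero, zero_apply]

theorem Module.free_quotient_range_of_ker_rTensor_residueField_le [IsLocalRing R]
    [Module.Finite R M] [Module.Finite R N] [Module.Free R N]
    {f : L →ₗ[R] M} {g : M →ₗ[R] N} (hfg : g ∘ₗ f = 0)
    (hex : LinearMap.ker (g.rTensor (IsLocalRing.ResidueField R)) ≤
      LinearMap.range (f.rTensor (IsLocalRing.ResidueField R))) :
    Module.Free R (N ⧸ LinearMap.range g) :=
  Module.free_of_lTensor_residueField_injective _ (LinearMap.range g).mkQ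
    (Submodule.mkQ_surjective _)
    (by rw [LinearMap.exact_iff, Submodule.ker_mkQ, Submodule.range_liftQ])
    ((LinearMap.lTensor_inj_iff_rTensor_inj _ _).mpr
      (LinearMap.rTensor_liftQ_range_injective _ hfg hex))

end

universe u in
theorem ModuleCat.isZero_tor_succ_of_flat {A : Type u} [CommRing A] (M N : ModuleCat.{u} A)
    [Module.Flat A M] (i : ℕ) : IsZero (((Tor (ModuleCat.{u} A) (i + 1)).obj M).obj N) := by
  let P : ProjectiveResolution N := (HasProjectiveResolution.out (Z := N)).some
  refine IsZero.of_iso ?_ (P.isoLeftDerivedObj ((tensoringLeft _).obj M) (i + 1))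
  have hP := (P.complex.exactAt_iff _).mp (P.complex_exactAt_succ i)
  have hMP := Module.Flat.lTensor_shortComplex_exact M _ hP
  have hexact : ((((tensoringLeft (ModuleCat.{u} A)).obj M).mapHomologicalComplex
      (ComplexShape.down ℕ)).obj P.complex).ExactAt (i + 1) :=
    (HomologicalComplex.exactAt_iff _ _).mpr hMP
  exact (HomologicalComplex.exactAt_iff_isZero_homology _ _).mp hexact

theorem ker_rTensor_le_range_of_isZero_homology_cxTensor {A : Type} [CommRing A]
    (K : CochainComplex (ModuleCat.{0} A) ℤ) (M : ModuleCat.{0} A) {i j k : ℤ}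
    (hij : i + 1 = j) (hjk : j + 1 = k) (h : IsZero ((cxTensor K M).homology j)) :
    LinearMap.ker ((K.d j k).hom.rTensor M) ≤ LinearMap.range ((K.d i j).hom.rTensor M) := by
  have hexact := ((cxTensor K M).exactAt_iff' i j k (by simp; omega) (by simp; omega)).mp
    (((cxTensor K M).exactAt_iff_isZero_homology j).mpr h)
  exact (ShortComplex.moduleCat_exact_iff_ker_sub_range _).mp hexact

theorem stmt8_general (A : Type) [CommRing A] [IsLocalRing A]
    (F : CochainComplex (ModuleCat.{0} A) ℤ)
    (hfree : ∀ i : ℤ, Module.Free A (F.X i) ∧ Module.Finite A (F.X i))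
    (n : ℤ)
    (hvan : ∀ i : ℤ, i < n →
      IsZero ((cxTensor F (ModuleCat.of A (IsLocalRing.ResidueField A))).homology i)) :
    (∀ i : ℕ, 0 < i →
      IsZero (((Tor (ModuleCat.{0} A) i).obj (cokernel (F.d (n - 1) n))).obj
        (ModuleCat.of A (IsLocalRing.ResidueField A)))) ∧
    (IsNoetherianRing A → Module.Free A ((cokernel (F.d (n - 1) n) : ModuleCat.{0} A))) := by
  have := (hfree (n - 1)).2
  obtain ⟨_, _⟩ := hfree n
  have hexact := ker_rTensor_le_range_of_isZero_homology_cxTensor F _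
    (i := n - 2) (j := n - 1) (k := n) (by omega) (by omega) (hvan (n - 1) (by omega))
  have hcoker : Module.Free A (cokernel (F.d (n - 1) n) : ModuleCat A) :=
    .of_equiv' (Module.free_quotient_range_of_ker_rTensor_residueField_le
        (by rw [← ModuleCat.hom_comp, F.d_comp_d, ModuleCat.hom_zero]) hexact)
      (ModuleCat.cokernelIsoRangeQuotient (F.d (n - 1) n)).toLinearEquiv.symm
  refine ⟨fun i hi => ?_, fun _ => hcoker⟩
  obtain ⟨j, rfl⟩ : ∃ j, i = j + 1 := ⟨i - 1, by omega⟩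
  exact ModuleCat.isZero_tor_succ_of_flat _ _ j

/-- Let `A` be a commutative local ring with maximal ideal `m` and `F` a
bounded-above cochain complex of finite free `A`-modules with `F^i = 0` for `i > 0`.
Let `n ≤ 0` and suppose `H^i(F ⊗^L A/m) = 0` for all `i < n`.  Then the cokernel of
`F^{n-1} → F^n` satisfies `Tor_i^A(coker, A/m) = 0` for all `i > 0`; in particular,
if `A` is noetherian this cokernel is free. -/
theorem stmt8 (A : Type) [CommRing A] [IsLocalRing A]
    (F : CochainComplex (ModuleCat.{0} A) ℤ)
    (hfree : ∀ i : ℤ, Module.Free A (F.X i) ∧ Module.Finite A (F.X i))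
    (hup : ∀ i : ℤ, 0 < i → IsZero (F.X i))
    (n : ℤ) (hn : n ≤ 0)
    (hvan : ∀ i : ℤ, i < n →
      IsZero ((cxTensor F (ModuleCat.of A (IsLocalRing.ResidueField A))).homology i)) :
    (∀ i : ℕ, 0 < i →
      IsZero (((Tor (ModuleCat.{0} A) i).obj (cokernel (F.d (n - 1) n))).obj
        (ModuleCat.of A (IsLocalRing.ResidueField A)))) ∧
    (IsNoetherianRing A → Module.Free A ((cokernel (F.d (n - 1) n) : ModuleCat.{0} A))) :=
  stmt8_general A F hfree n hvan
end
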